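/- arXiv:2010.04433 — 6 statements merged into one kernel-verified Lean document; each statement's English description precedes it below -/
import Mathlib

section
/- Let R be a commutative ring, q ∈ R, and let A be a commutative R-algebra equipped with an R-algebra homomorphism R[X] → A which is formally étale; let x ∈ A be the image of X. Assume that A is complete and separated for the (q−1)A-adic topology (i.e., A is (q−1)-adically complete). Then there exists a unique R-algebra endomorphism σ of A such that σ(x) = q·x and σ(a) ≡ a (mod (q−1)A) for all a ∈ A. -/
/-!
Modulo `q - 1` the maps `X ↦ x` and `X ↦ q x` from `R[X]` to `A` agree, so `σ` is the lift of the
quotient map `A → A ⧸ (q - 1)` along the formally étale map `R[X] → A`, where `R[X]` acts on the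
target through `X ↦ q x`. Formal smoothness lifts it through every thickening `A ⧸ (q - 1) ^ n`,
and completeness assembles these lifts to a map into `A`; formal unramifiedness together with
separatedness makes the lift unique.
-/

open Polynomial

universe u

namespace Algebra.FormallyEtale

variable {B A S : Type*} [CommRing B] [CommRing A] [Algebra B A] [FormallyEtale B A]
  [CommRing S] {I : Ideal S} [IsAdicComplete I S]

theorem existsUnique_ringHom_lift_of_isAdicComplete (φ : B →+* S) (f : A →+* S ⧸ I)
    (hf : f.comp (algebraMap B A) = (Ideal.Quotient.mk I).comp φ) :
    ∃! g : A →+* S, g.comp (algebraMap B A) = φ ∧ (Ideal.Quotient.mk I).comp g = f := by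
  let := φ.toAlgebra
  let f' : A →ₐ[B] S ⧸ I := { f with commutes' := RingHom.congr_fun hf }
  obtain ⟨g, hg⟩ := FormallySmooth.exists_mkₐ_comp_eq_of_isAdicComplete f'
  refine ⟨g, ⟨g.comp_algebraMap, congrArg AlgHom.toRingHom hg⟩, ?_⟩
  rintro g' ⟨hg'φ, hg'f⟩
  let g'' : A →ₐ[B] S := { g' with commutes' := RingHom.congr_fun hg'φ }
  have hI : ⨅ n, I ^ n = ⊥ := by
    simpa using (IsAdicComplete.toIsHausdorff (I := I) (M := S)).iInf_pow_smul
  have hg'' : g'' = g := FormallyUnramified.ext_of_iInf I hI fun a => by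
    simpa [g''] using (RingHom.congr_fun hg'f a).trans (AlgHom.congr_fun hg a).symm
  exact congrArg AlgHom.toRingHom hg''

end Algebra.FormallyEtale

/-- If `x` is a topologically étale coordinate on the `(q-1)`-adically complete
`R`-algebra `A`, then there is a unique continuous (i.e. congruent to the identity
modulo `q-1`) `R`-algebra endomorphism `σ` of `A` with `σ(x) = q·x`. -/
theorem exists_unique_sigma
    (R A : Type u) [CommRing R] (q : R)
    [CommRing A] [Algebra R A]
    [Algebra (Polynomial R) A] [IsScalarTower R (Polynomial R) A]
    [Algebra.FormallyEtale (Polynomial R) A]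
    (x : A) (hx : x = algebraMap (Polynomial R) A X)
    [IsAdicComplete (Ideal.span {algebraMap R A q - 1}) A] :
    ∃! σ : A →ₐ[R] A,
      σ x = algebraMap R A q * x ∧
      ∀ a : A, σ a - a ∈ Ideal.span {algebraMap R A q - 1} := by
  set I : Ideal A := Ideal.span {algebraMap R A q - 1}
  let φ : R[X] →ₐ[R] A := aeval (algebraMap R A q * x)
  have hφ : (Ideal.Quotient.mkₐ R I).comp (IsScalarTower.toAlgHom R R[X] A) =
      (Ideal.Quotient.mkₐ R I).comp φ := by
    have hq : Ideal.Quotient.mk I (algebraMap R A q) = 1 :=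
      Ideal.Quotient.eq.mpr (by simp [I])
    ext
    simp [φ, ← hx, hq]
  obtain ⟨g, ⟨hgφ, hgI⟩, hg_unique⟩ :=
    Algebra.FormallyEtale.existsUnique_ringHom_lift_of_isAdicComplete φ.toRingHom
      (Ideal.Quotient.mk I) (congrArg AlgHom.toRingHom hφ)
  have hg_algebraMap (r : R) : g (algebraMap R A r) = algebraMap R A r := by
    simpa [φ, IsScalarTower.algebraMap_apply R R[X] A] using RingHom.congr_fun hgφ (C r)
  let σ : A →ₐ[R] A := { g with commutes' := hg_algebraMap }
  refine ⟨σ, ⟨?_, fun a => Ideal.Quotient.eq.mp (RingHom.congr_fun hgI a)⟩, ?_⟩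
  · change g x = _
    simpa [φ, hx] using RingHom.congr_fun hgφ X
  rintro σ' ⟨hσ'x, hσ'I⟩
  refine AlgHom.ext (RingHom.congr_fun (hg_unique σ' ⟨?_, ?_⟩))
  · have hσ'φ : σ'.comp (IsScalarTower.toAlgHom R R[X] A) = φ :=
      Polynomial.algHom_ext (by simp [φ, ← hx, hσ'x])
    exact congrArg AlgHom.toRingHom hσ'φ
  · exact RingHom.ext fun a => Ideal.Quotient.eq.mpr (hσ'I a)
end

section
/- Let R be a commutative ring, q ∈ R, and let A be a commutative R-algebra with a formally étale structure map R[X] → A; let x be the image of X. Assume q−1 is nilpotent in A, and let σ be an R-algebra endomorphism of A with σ(x) = q·x and σ(a) − a ∈ (q−1)A for all a ∈ A. Let I be the kernel of the multiplication map A ⊗_R A → A, extend σ to A ⊗_R A as σ ⊗ id, and for n ∈ ℕ set I^{(n+1)_σ} := I · J_1 · ⋯ · J_n, where J_i is the ideal of A ⊗_R A generated by the image of I under (σ ⊗ id)^i. Then for every n ∈ ℕ, the A-algebra homomorphism A[ξ] → (A ⊗_R A)/I^{(n+1)_σ} sending ξ to the class of 1⊗x − x⊗1 (where A acts on A ⊗_R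 A through a ↦ a⊗1) is surjective with kernel generated by ξ^{(n+1)_q} := ∏_{i=0}^{n}(ξ + (1−q^i)·x); that is, it induces an isomorphism of A-algebras A[ξ]/(∏_{i=0}^{n}(ξ + (1−q^i)x)) ≅ (A ⊗_R A)/I^{(n+1)_σ}. (This says that x is a q-coordinate on A.) -/
/-!
Let `f = ∏_{i ≤ n} (ξ + (1 - q^i) x) ∈ A[ξ]`. Since `q - 1` is nilpotent, `ξ` is nilpotent in
`A[ξ]/(f)`, and the diagonal ideal `I` is nilpotent modulo `I^{(n+1)_σ}` because
`I ⊆ (σ ⊗ id)^i(I) + (q - 1)` for every `i`. Formal smoothness over `R[X]` yields a Taylor map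
`ρ : A → A[ξ]/(f)` with `ρ(x) = x + ξ` and `ρ ≡ id` modulo `ξ`. Formal unramifiedness shows
`ρ ≡ σ^i` modulo the factor `ξ + (1 - q^i) x`, as both send `x` to `q^i x` there; hence
`a ⊗ b ↦ a ρ(b)` kills `I^{(n+1)_σ}`. The induced map `(A ⊗ A)/I^{(n+1)_σ} → A[ξ]/(f)` is inverse
to `ξ ↦ 1 ⊗ x - x ⊗ 1`: one composite fixes `ξ`, and the other is the identity by formal
unramifiedness once more, `I` being nilpotent in the quotient.
-/

open Polynomial TensorProduct

universe u

namespace Ideal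

variable {T : Type*} [CommRing T]

theorem pow_card_le_prod_sup {ι : Type*} (s : Finset ι) {I N : Ideal T} {J : ι → Ideal T}
    (h : ∀ i ∈ s, I ≤ J i ⊔ N) : I ^ s.card ≤ (∏ i ∈ s, J i) ⊔ N := by
  have hle : ∀ K L : Ideal T, K ≤ L ⊔ N ↔ K.map (Quotient.mk N) ≤ L.map (Quotient.mk N) := by
    intro K L
    rw [map_le_iff_le_comap, comap_map_of_surjective' _ Quotient.mk_surjective, mk_ker]
  simp only [hle, ← mapHom_apply] at h ⊢
  rw [map_pow, map_prod]
  exact Finset.pow_card_le_prod _ _ _ h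

theorem isNilpotent_span_singleton {a : T} (ha : IsNilpotent a) : IsNilpotent (span {a}) := by
  obtain ⟨m, hm⟩ := ha
  exact ⟨m, by rw [span_singleton_pow, hm, span_singleton_eq_bot.mpr rfl, zero_eq_bot]⟩

theorem isNilpotent_of_pow_le {I N : Ideal T} {k : ℕ} (h : I ^ k ≤ N) (hN : IsNilpotent N) :
    IsNilpotent I := by
  obtain ⟨m, hm⟩ := hN
  refine IsNilpotent.of_pow (m := k) ⟨m, le_bot_iff.mp ?_⟩
  simpa [hm] using pow_right_mono h m

end Ideal

theorem IsNilpotent.of_prod_add {T ι : Type*} [CommRing T] {s : Finset ι} {y : T} {e : ι → T}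
    (he : ∀ i ∈ s, IsNilpotent (e i)) (h : IsNilpotent (∏ i ∈ s, (y + e i))) : IsNilpotent y := by
  have hpow : y ^ s.card - ∏ i ∈ s, (y + e i) ∈ nilradical T := by
    rw [← Ideal.Quotient.eq_zero_iff_mem, map_sub, map_pow, map_prod,
      Finset.prod_congr rfl fun i hi => by
        rw [map_add, Ideal.Quotient.eq_zero_iff_mem.mpr (mem_nilradical.mpr (he i hi)), add_zero],
      Finset.prod_const, sub_self]
  refine IsNilpotent.of_pow (m := s.card) ?_
  simpa using (Commute.all _ _).isNilpotent_add (mem_nilradical.mp hpow) h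

open AdjoinRoot

theorem AdjoinRoot.aeval_surjective_and_ker_eq_of_bijective {A S : Type*} [CommRing A]
    [CommRing S] [Algebra A S] {f : A[X]} (θ : AdjoinRoot f →ₐ[A] S) (hθ : Function.Bijective θ) :
    Function.Surjective (aeval (R := A) (θ (root f))) ∧
      RingHom.ker (aeval (R := A) (θ (root f))) = Ideal.span {f} := by
  have hcomp : ∀ p, aeval (θ (root f)) p = θ (mk f p) := fun p => by
    rw [aeval_algHom_apply, aeval_eq]
  refine ⟨fun s => ?_, ?_⟩
  · obtain ⟨y, rfl⟩ := hθ.2 s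
    obtain ⟨p, rfl⟩ := Ideal.Quotient.mk_surjective y
    exact ⟨p, hcomp p⟩
  · ext p
    rw [RingHom.mem_ker, hcomp, map_eq_zero_iff θ hθ.1, mk_eq_zero, Ideal.mem_span_singleton]

section PolynomialCoordinate

variable {R A B : Type*} [CommRing R] [CommRing A] [Algebra R A] [Algebra R[X] A]
  [IsScalarTower R R[X] A] [CommRing B] [Algebra R B]

theorem AlgHom.apply_algebraMap_polynomial (h : A →ₐ[R] B) (p : R[X]) :
    h (algebraMap R[X] A p) = aeval (h (algebraMap R[X] A X)) p := by
  rw [aeval_algHom_apply, aeval_algebraMap_apply, aeval_X_left_apply]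

theorem exists_algHom_lift_of_formallySmooth [Algebra.FormallySmooth R[X] A] {N : Ideal B}
    (hN : IsNilpotent N) (g : A →ₐ[R] B ⧸ N) (y : B)
    (hy : Ideal.Quotient.mk N y = g (algebraMap R[X] A X)) :
    ∃ h : A →ₐ[R] B, h (algebraMap R[X] A X) = y ∧ ∀ a, Ideal.Quotient.mk N (h a) = g a := by
  let _ : Algebra R[X] B := (aeval y).toAlgebra
  let g' : A →ₐ[R[X]] B ⧸ N :=
    { g with
      commutes' := fun p => by
        rw [← Ideal.Quotient.mkₐ_eq_mk R] at hy
        exact (g.apply_algebraMap_polynomial p).trans (by rw [← hy, aeval_algHom_apply]; rfl) }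
  let h := Algebra.FormallySmooth.lift N hN g'
  refine ⟨{ h with commutes' := fun r => ?_ }, ?_, Algebra.FormallySmooth.mk_lift N hN g'⟩
  · exact (congrArg h (IsScalarTower.algebraMap_apply R R[X] A r)).trans
      ((h.commutes (C r)).trans (aeval_C y r))
  · exact (h.commutes X).trans (aeval_X y)

theorem algHom_ext_of_formallyUnramified [Algebra.FormallyUnramified R[X] A] {N : Ideal B}
    (hN : IsNilpotent N) {h₁ h₂ : A →ₐ[R] B}
    (hx : h₁ (algebraMap R[X] A X) = h₂ (algebraMap R[X] A X))
    (H : ∀ a, Ideal.Quotient.mk N (h₁ a) = Ideal.Quotient.mk N (h₂ a)) : h₁ = h₂ := by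
  let _ : Algebra R[X] B := (aeval (h₁ (algebraMap R[X] A X))).toAlgebra
  let lift (h : A →ₐ[R] B) (hh : h (algebraMap R[X] A X) = h₁ (algebraMap R[X] A X)) :
      A →ₐ[R[X]] B :=
    { h with commutes' := fun p => (h.apply_algebraMap_polynomial p).trans (by rw [hh]; rfl) }
  have := Algebra.FormallyUnramified.ext N hN (g₁ := lift h₁ rfl) (g₂ := lift h₂ hx.symm) H
  exact AlgHom.ext fun a => AlgHom.congr_fun this a

end PolynomialCoordinate

section TwistedPrincipalParts

variable {R A : Type*} [CommRing R] [CommRing A] [Algebra R A]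

-- The paper's `ξ^{(m)_q}`.
noncomputable def qTwistedPow (q x : A) (m : ℕ) : A[X] :=
  ∏ i ∈ Finset.range m, (X + C ((1 - q ^ i) * x))

-- The paper's `I^{(m)_σ}`, where `I` is the diagonal ideal.
noncomputable def twistedDiagonalPow (σ : A →ₐ[R] A) (m : ℕ) : Ideal (A ⊗[R] A) :=
  ∏ i ∈ Finset.range m,
    (KaehlerDifferential.ideal R A).map (Algebra.TensorProduct.map σ (AlgHom.id R A) ^ i)

theorem AlgHom.pow_apply_sub_mem {σ : A →ₐ[R] A} {J : Ideal A} (h : ∀ a, σ a - a ∈ J)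
    (i : ℕ) (a : A) : (σ ^ i) a - a ∈ J := by
  induction i generalizing a with
  | zero => simp
  | succ i ih =>
    rw [pow_succ, AlgHom.mul_apply, ← sub_add_sub_cancel]
    exact add_mem (ih _) (h a)

theorem Algebra.TensorProduct.map_id_pow_tmul {B : Type*} [CommRing B] [Algebra R B]
    (σ : A →ₐ[R] A) (i : ℕ) (a : A) (b : B) :
    (Algebra.TensorProduct.map σ (AlgHom.id R B) ^ i) (a ⊗ₜ b) = (σ ^ i) a ⊗ₜ b := by
  induction i generalizing a with
  | zero => rfl
  | succ i ih => rw [pow_succ, AlgHom.mul_apply, map_tmul, AlgHom.id_apply, ih, pow_succ,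
      AlgHom.mul_apply]

theorem isNilpotent_one_sub_pow_mul {q : A} (hq : IsNilpotent (q - 1)) (i : ℕ) (x : A) :
    IsNilpotent ((1 - q ^ i) * x) := by
  obtain ⟨k, hk⟩ := sub_dvd_pow_sub_pow q 1 i
  rw [one_pow] at hk
  rw [← neg_sub, hk, neg_mul, mul_assoc, isNilpotent_neg_iff]
  exact (Commute.all _ _).isNilpotent_mul_right hq

theorem AdjoinRoot.prod_root_add_eq_zero (q x : A) (m : ℕ) :
    ∏ i ∈ Finset.range m, (root (qTwistedPow q x m) + of _ ((1 - q ^ i) * x)) = 0 := by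
  calc _ = mk (qTwistedPow q x m) (∏ i ∈ Finset.range m, (X + C ((1 - q ^ i) * x))) := by
        simp only [map_prod, map_add, mk_X, mk_C]
    _ = 0 := mk_self

theorem AdjoinRoot.isNilpotent_root_qTwistedPow {q : A} (hq : IsNilpotent (q - 1)) (x : A)
    (m : ℕ) : IsNilpotent (root (qTwistedPow q x m)) :=
  IsNilpotent.of_prod_add (fun i _ => (isNilpotent_one_sub_pow_mul hq i x).map (of _))
    (prod_root_add_eq_zero q x m ▸ IsNilpotent.zero)

variable {x : A}

theorem AlgHom.pow_apply_eq_pow_mul {σ : A →ₐ[R] A} {q : R}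
    (h : σ x = algebraMap R A q * x) (i : ℕ) : (σ ^ i) x = algebraMap R A q ^ i * x := by
  induction i with
  | zero => simp
  | succ i ih =>
    rw [pow_succ, AlgHom.mul_apply, h, map_mul, AlgHom.commutes, ih, pow_succ', mul_assoc]

theorem KaehlerDifferential.ideal_le_map_pow_sup {σ : A →ₐ[R] A} {J : Ideal A}
    (hσ : ∀ a, σ a - a ∈ J) (i : ℕ) :
    KaehlerDifferential.ideal R A ≤
      (KaehlerDifferential.ideal R A).map (Algebra.TensorProduct.map σ (AlgHom.id R A) ^ i) ⊔
        J.map Algebra.TensorProduct.includeLeftRingHom := by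
  conv_lhs => rw [← KaehlerDifferential.span_range_eq_ideal]
  rw [Ideal.span_le]
  rintro _ ⟨a, rfl⟩
  have hdecomp : (1 : A) ⊗ₜ[R] a - a ⊗ₜ[R] 1 =
      (Algebra.TensorProduct.map σ (AlgHom.id R A) ^ i) (1 ⊗ₜ a - a ⊗ₜ 1) +
        Algebra.TensorProduct.includeLeftRingHom ((σ ^ i) a - a) := by
    simp only [map_sub, Algebra.TensorProduct.map_id_pow_tmul, map_one,
      Algebra.TensorProduct.includeLeftRingHom_apply]
    abel
  show (1 : A) ⊗ₜ[R] a - a ⊗ₜ[R] 1 ∈ _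
  rw [hdecomp]
  exact add_mem (Ideal.mem_sup_left (Ideal.mem_map_of_mem _
      (KaehlerDifferential.one_smul_sub_smul_one_mem_ideal R a)))
    (Ideal.mem_sup_right (Ideal.mem_map_of_mem _ (AlgHom.pow_apply_sub_mem hσ i a)))

theorem isNilpotent_map_ideal_twistedDiagonalPow {σ : A →ₐ[R] A} {J : Ideal A}
    (hσ : ∀ a, σ a - a ∈ J) (hJ : IsNilpotent J) (m : ℕ) :
    IsNilpotent
      ((KaehlerDifferential.ideal R A).map (Ideal.Quotient.mk (twistedDiagonalPow σ m))) := by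
  let π := Ideal.Quotient.mk (twistedDiagonalPow σ m)
  let ι : A →+* A ⊗[R] A := Algebra.TensorProduct.includeLeftRingHom
  let J' := J.map ι
  refine Ideal.isNilpotent_of_pow_le (k := m) ?_
    ((hJ.map (Ideal.mapHom ι)).map (Ideal.mapHom π))
  calc (KaehlerDifferential.ideal R A).map π ^ m
      = ((KaehlerDifferential.ideal R A) ^ (Finset.range m).card).map π := by
        rw [Ideal.map_pow, Finset.card_range]
    _ ≤ (twistedDiagonalPow σ m ⊔ J').map π :=
        Ideal.map_mono (Ideal.pow_card_le_prod_sup _ fun i _ =>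
          KaehlerDifferential.ideal_le_map_pow_sup hσ i)
    _ = J'.map π := by rw [Ideal.map_sup, Ideal.map_quotient_self, bot_sup_eq]

theorem twistedDiagonalPow_le_ker_productLeftAlgHom {q : A} {σ : A →ₐ[R] A} {m : ℕ}
    {ρ : A →ₐ[R] AdjoinRoot (qTwistedPow q x m)}
    (hρσ : ∀ i a, ρ a - of _ ((σ ^ i) a) ∈
      Ideal.span {root (qTwistedPow q x m) + of _ ((1 - q ^ i) * x)}) :
    twistedDiagonalPow σ m ≤
      RingHom.ker (Algebra.TensorProduct.productLeftAlgHom (Algebra.ofId A _) ρ) := by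
  set ψ := Algebra.TensorProduct.productLeftAlgHom (Algebra.ofId A _) ρ
  rw [RingHom.ker_eq_comap_bot, ← Ideal.map_le_iff_le_comap, twistedDiagonalPow,
    ← Ideal.mapHom_apply, map_prod]
  calc _ ≤ ∏ i ∈ Finset.range m, Ideal.span {root (qTwistedPow q x m) + of _ ((1 - q ^ i) * x)} :=
        Finset.prod_le_prod' fun i _ => ?_
    _ = ⊥ := by
        rw [Ideal.prod_span_singleton, AdjoinRoot.prod_root_add_eq_zero,
          Ideal.span_singleton_eq_bot.mpr rfl]
  rw [Ideal.mapHom_apply, Ideal.map_le_iff_le_comap, Ideal.map_le_iff_le_comap,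
    ← KaehlerDifferential.span_range_eq_ideal, Ideal.span_le]
  rintro _ ⟨a, rfl⟩
  simp only [SetLike.mem_coe, Ideal.mem_comap, map_sub, Algebra.TensorProduct.map_id_pow_tmul,
    map_one, ψ, Algebra.TensorProduct.lift_tmul, Algebra.ofId_apply,
    AdjoinRoot.algebraMap_eq, one_mul, mul_one]
  exact hρσ i a

theorem aeval_qTwistedPow_eq_zero {q : R} {σ : A →ₐ[R] A} (hσx : σ x = algebraMap R A q * x)
    (m : ℕ) :
    aeval (Ideal.Quotient.mk (twistedDiagonalPow σ m) (1 ⊗ₜ[R] x - x ⊗ₜ[R] 1))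
      (qTwistedPow (algebraMap R A q) x m) = 0 := by
  let π := Ideal.Quotient.mk (twistedDiagonalPow σ m)
  let τ := Algebra.TensorProduct.map σ (AlgHom.id R A)
  have hfactor : ∀ i, aeval (π (1 ⊗ₜ[R] x - x ⊗ₜ[R] 1)) (X + C ((1 - algebraMap R A q ^ i) * x)) =
      π ((τ ^ i) (1 ⊗ₜ[R] x - x ⊗ₜ[R] 1)) := by
    intro i
    rw [map_add, aeval_X, aeval_C, ← Ideal.Quotient.mk_algebraMap, ← map_add]
    congr 1
    simp only [map_sub, τ, Algebra.TensorProduct.map_id_pow_tmul, map_one,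
      AlgHom.pow_apply_eq_pow_mul hσx, Algebra.TensorProduct.algebraMap_apply,
      Algebra.algebraMap_self_apply, sub_mul, one_mul]
    abel
  rw [qTwistedPow, map_prod, Finset.prod_congr rfl fun i _ => hfactor i, ← map_prod,
    Ideal.Quotient.eq_zero_iff_mem]
  exact Ideal.prod_mem_prod fun i _ =>
    Ideal.mem_map_of_mem _ (KaehlerDifferential.one_smul_sub_smul_one_mem_ideal R x)

noncomputable def AdjoinRoot.toTwistedPrincipalParts {q : R} {σ : A →ₐ[R] A}
    (hσx : σ x = algebraMap R A q * x) (m : ℕ) :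
    AdjoinRoot (qTwistedPow (algebraMap R A q) x m) →ₐ[A] (A ⊗[R] A) ⧸ twistedDiagonalPow σ m :=
  liftAlgHom _ (Algebra.ofId A _) (Ideal.Quotient.mk _ (1 ⊗ₜ[R] x - x ⊗ₜ[R] 1))
    (aeval_qTwistedPow_eq_zero hσx m)

@[simp]
theorem AdjoinRoot.toTwistedPrincipalParts_root {q : R} {σ : A →ₐ[R] A}
    (hσx : σ x = algebraMap R A q * x) (m : ℕ) :
    toTwistedPrincipalParts hσx m (root _) = Ideal.Quotient.mk _ (1 ⊗ₜ[R] x - x ⊗ₜ[R] 1) :=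
  liftAlgHom_root ..

@[simp]
theorem AdjoinRoot.toTwistedPrincipalParts_of {q : R} {σ : A →ₐ[R] A}
    (hσx : σ x = algebraMap R A q * x) (m : ℕ) (a : A) :
    toTwistedPrincipalParts hσx m (of _ a) = Ideal.Quotient.mk _ (a ⊗ₜ[R] 1) :=
  liftAlgHom_of ..

section EtaleCoordinate

variable [Algebra R[X] A] [IsScalarTower R R[X] A]

theorem AdjoinRoot.exists_algHom_root_add [Algebra.FormallySmooth R[X] A] {f : A[X]}
    (hf : IsNilpotent (root f)) (hx : x = algebraMap R[X] A X) :
    ∃ ρ : A →ₐ[R] AdjoinRoot f,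
      ρ x = root f + of f x ∧ ∀ a, ρ a - of f a ∈ Ideal.span {root f} := by
  subst hx
  obtain ⟨ρ, hρx, hρ⟩ :=
    exists_algHom_lift_of_formallySmooth (Ideal.isNilpotent_span_singleton hf)
    ((Ideal.Quotient.mkₐ R (Ideal.span {root f})).comp (IsScalarTower.toAlgHom R A _))
    (root f + of f (algebraMap R[X] A X)) (Ideal.Quotient.eq.mpr (by simp))
  exact ⟨ρ, hρx, fun a => Ideal.Quotient.eq.mp (hρ a)⟩

theorem AdjoinRoot.algHom_sub_of_pow_apply_mem [Algebra.FormallyUnramified R[X] A] {q : R}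
    (hq : IsNilpotent (algebraMap R A q - 1)) (hx : x = algebraMap R[X] A X) {σ : A →ₐ[R] A}
    (hσx : σ x = algebraMap R A q * x) (hσ : ∀ a, σ a - a ∈ Ideal.span {algebraMap R A q - 1})
    {f : A[X]} (hf : IsNilpotent (root f)) {ρ : A →ₐ[R] AdjoinRoot f}
    (hρx : ρ x = root f + of f x) (hρ : ∀ a, ρ a - of f a ∈ Ideal.span {root f}) (i : ℕ)
    (a : A) :
    ρ a - of f ((σ ^ i) a) ∈ Ideal.span {root f + of f ((1 - algebraMap R A q ^ i) * x)} := by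
  set w := root f + of f ((1 - algebraMap R A q ^ i) * x)
  let π := Ideal.Quotient.mkₐ R (Ideal.span {w})
  let N : Ideal (AdjoinRoot f) := Ideal.span {root f} ⊔ Ideal.span {of f (algebraMap R A q - 1)}
  have hN : IsNilpotent N :=
    (Commute.all _ _).isNilpotent_add (Ideal.isNilpotent_span_singleton hf)
      (Ideal.isNilpotent_span_singleton (hq.map (of f)))
  -- Modulo `w` both maps send `x` to `x + ξ ≡ q^i x`, and both reduce to `a ↦ a` modulo `N`.
  have key : π.comp ρ = π.comp ((IsScalarTower.toAlgHom R A _).comp (σ ^ i)) := by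
    refine algHom_ext_of_formallyUnramified (hN.map (Ideal.mapHom π)) ?_ fun b => ?_
    · rw [← hx]
      simp only [AlgHom.comp_apply, IsScalarTower.coe_toAlgHom', AdjoinRoot.algebraMap_eq, π,
        Ideal.Quotient.mkₐ_eq_mk, Ideal.Quotient.eq, hρx, AlgHom.pow_apply_eq_pow_mul hσx]
      convert Ideal.mem_span_singleton_self w using 1
      simp only [w, add_sub_assoc, ← map_sub]
      ring_nf
    · simp only [AlgHom.comp_apply, IsScalarTower.coe_toAlgHom', AdjoinRoot.algebraMap_eq, π,
        Ideal.Quotient.mkₐ_eq_mk, Ideal.Quotient.eq, ← map_sub]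
      refine Ideal.mem_map_of_mem _ ?_
      rw [← sub_sub_sub_cancel_right _ _ (of f b), ← map_sub]
      exact sub_mem (Ideal.mem_sup_left (hρ b)) (Ideal.mem_sup_right (Ideal.mem_span_singleton.mpr
        (map_dvd (of f) (Ideal.mem_span_singleton.mp (AlgHom.pow_apply_sub_mem hσ i b)))))
  exact Ideal.Quotient.eq.mp (AlgHom.congr_fun key a)

theorem AdjoinRoot.toTwistedPrincipalParts_comp_eq_includeRight
    [Algebra.FormallyUnramified R[X] A] {q : R} (hq : IsNilpotent (algebraMap R A q - 1))
    (hx : x = algebraMap R[X] A X) {σ : A →ₐ[R] A}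
    (hσx : σ x = algebraMap R A q * x) (hσ : ∀ a, σ a - a ∈ Ideal.span {algebraMap R A q - 1})
    {m : ℕ} {ρ : A →ₐ[R] AdjoinRoot (qTwistedPow (algebraMap R A q) x m)}
    (hρx : ρ x = root _ + of _ x) (hρ : ∀ a, ρ a - of _ a ∈ Ideal.span {root _}) :
    ((toTwistedPrincipalParts hσx m).restrictScalars R).comp ρ =
      (Ideal.Quotient.mkₐ R (twistedDiagonalPow σ m)).comp Algebra.TensorProduct.includeRight := by
  set π := Ideal.Quotient.mk (twistedDiagonalPow σ m)
  have hδ : π (1 ⊗ₜ[R] x - x ⊗ₜ[R] 1) ∈ (KaehlerDifferential.ideal R A).map π :=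
    Ideal.mem_map_of_mem _ (KaehlerDifferential.one_smul_sub_smul_one_mem_ideal R x)
  refine algHom_ext_of_formallyUnramified (isNilpotent_map_ideal_twistedDiagonalPow hσ
    (Ideal.isNilpotent_span_singleton hq) m) ?_ fun a => ?_
  · rw [← hx, AlgHom.comp_apply, AlgHom.restrictScalars_apply, hρx, map_add,
      toTwistedPrincipalParts_root, toTwistedPrincipalParts_of, ← map_add, sub_add_cancel]
    rfl
  · obtain ⟨r, hr⟩ := Ideal.mem_span_singleton.mp (hρ a)
    rw [AlgHom.comp_apply, AlgHom.restrictScalars_apply, eq_add_of_sub_eq' hr, map_add, map_mul,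
      toTwistedPrincipalParts_root, toTwistedPrincipalParts_of, Ideal.Quotient.eq]
    convert sub_mem (Ideal.mul_mem_right (toTwistedPrincipalParts hσx m r) _ hδ)
      (Ideal.mem_map_of_mem π (KaehlerDifferential.one_smul_sub_smul_one_mem_ideal R a)) using 1
    simp only [AlgHom.comp_apply, Ideal.Quotient.mkₐ_eq_mk,
      Algebra.TensorProduct.includeRight_apply, π, map_sub]
    ring

theorem AdjoinRoot.toTwistedPrincipalParts_bijective [Algebra.FormallyEtale R[X] A] {q : R}
    (hq : IsNilpotent (algebraMap R A q - 1)) (hx : x = algebraMap R[X] A X) {σ : A →ₐ[R] A}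
    (hσx : σ x = algebraMap R A q * x) (hσ : ∀ a, σ a - a ∈ Ideal.span {algebraMap R A q - 1})
    (m : ℕ) :
    Function.Bijective (toTwistedPrincipalParts hσx m) := by
  have hf := isNilpotent_root_qTwistedPow hq x m
  obtain ⟨ρ, hρx, hρ⟩ := exists_algHom_root_add hf hx
  let θ := toTwistedPrincipalParts hσx m
  let ψ : (A ⊗[R] A) ⧸ twistedDiagonalPow σ m →ₐ[A] AdjoinRoot _ :=
    Ideal.Quotient.liftₐ _ (Algebra.TensorProduct.productLeftAlgHom (Algebra.ofId A _) ρ)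
      fun _ ht => twistedDiagonalPow_le_ker_productLeftAlgHom
        (algHom_sub_of_pow_apply_mem hq hx hσx hσ hf hρx hρ) ht
  have hψ : ∀ a b, ψ (Ideal.Quotient.mk _ (a ⊗ₜ b)) = of _ a * ρ b := fun _ _ => rfl
  have hψθ : ψ.comp θ = AlgHom.id A _ := by
    refine AdjoinRoot.algHom_ext ?_
    simp [θ, hψ, hρx]
  have hθψ : θ.comp ψ = AlgHom.id A _ := by
    refine Ideal.Quotient.algHom_ext A (Algebra.TensorProduct.ext (Subsingleton.elim _ _) ?_)
    ext a
    simpa [θ, hψ] using AlgHom.congr_fun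
      (toTwistedPrincipalParts_comp_eq_includeRight hq hx hσx hσ hρx hρ) a
  exact (AlgEquiv.ofAlgHom θ ψ hθψ hψθ).bijective

end EtaleCoordinate

end TwistedPrincipalParts

/-- A topologically étale coordinate is a `q`-coordinate: the twisted principal parts of
order `n` of `A/R` are the free `A`-algebra `A[ξ]/(ξ^{(n+1)_q})` via `ξ ↦ 1⊗x - x⊗1`. -/
theorem topologically_etale_coordinate_is_q_coordinate
    (R A : Type u) [CommRing R] (q : R)
    [CommRing A] [Algebra R A]
    [Algebra (Polynomial R) A] [IsScalarTower R (Polynomial R) A]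
    [Algebra.FormallyEtale (Polynomial R) A]
    (x : A) (hx : x = algebraMap (Polynomial R) A Polynomial.X)
    (hq : IsNilpotent (algebraMap R A q - 1))
    (σ : A →ₐ[R] A) (hσx : σ x = algebraMap R A q * x)
    (hσ : ∀ a : A, σ a - a ∈ Ideal.span {algebraMap R A q - 1})
    (I : Ideal (A ⊗[R] A))
    (hI : I = RingHom.ker (Algebra.TensorProduct.lmul' R (S := A)).toRingHom)
    (τ : (A ⊗[R] A) →ₐ[R] (A ⊗[R] A))
    (hτ : τ = Algebra.TensorProduct.map σ (AlgHom.id R A))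
    (n : ℕ) :
    Function.Surjective
      (Polynomial.aeval (R := A)
        (Ideal.Quotient.mk (∏ i ∈ Finset.range (n + 1), Ideal.map (τ ^ i) I)
          ((1 : A) ⊗ₜ[R] x - x ⊗ₜ[R] (1 : A)))) ∧
    RingHom.ker
      (Polynomial.aeval (R := A)
        (Ideal.Quotient.mk (∏ i ∈ Finset.range (n + 1), Ideal.map (τ ^ i) I)
          ((1 : A) ⊗ₜ[R] x - x ⊗ₜ[R] (1 : A))))
      = Ideal.span
          {∏ i ∈ Finset.range (n + 1),
            (Polynomial.X + Polynomial.C ((1 - algebraMap R A q ^ i) * x))} := by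
  subst hI hτ
  have h := AdjoinRoot.aeval_surjective_and_ker_eq_of_bijective _
    (AdjoinRoot.toTwistedPrincipalParts_bijective hq hx hσx hσ (n + 1))
  rwa [AdjoinRoot.toTwistedPrincipalParts_root] at h
end

section
/- Let p be a prime number, let R be a commutative ring equipped with a ring endomorphism φ_R such that φ_R(r) ≡ r^p (mod pR) for all r ∈ R (a Frobenius lift). Let A be a commutative R-algebra with a formally étale structure map R[X] → A, let x ∈ A be the image of X, and assume A is p-adically complete (complete and separated for the pA-adic topology). Then there exists a unique ring endomorphism φ_A of A such that: (i) φ_A ∘ (algebraMap R A) = (algebraMap R A) ∘ φ_R; (ii) φ_A(a) ≡ a^p (mod pA) for all a ∈ A; and (iii) φ_A(x) = x^p. -/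
open Polynomial

universe u

/-!
Conditions (i) and (iii) say that `φA` restricts on `R[X]` to
`ψ = eval₂ (algebraMap R A ∘ φR) (x ^ p)`, and (ii) says that `φA` reduces modulo `p` to the
Frobenius `A → A ⧸ pA`. Because `φR` lifts the Frobenius of `R`, the Frobenius of `A` restricts
on `R[X]` to `ψ` modulo `p`. Making `A` an `R[X]`-algebra through `ψ`, the Frobenius is then an
`R[X]`-algebra map `A → A ⧸ pA`, and a formally étale algebra maps uniquely to the `p`-adically
complete ring `A` over any given map to `A ⧸ pA`: formal smoothness lifts it step by step
through the nilpotent thickenings `A ⧸ p^(n+1) → A ⧸ p^n`, and formal unramifiedness makes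
each lift unique.
-/

def frobeniusMod {A : Type*} [CommRing A] (p : ℕ) (hp : p.Prime) (I : Ideal A)
    (hpI : (p : A) ∈ I) : A →+* A ⧸ I where
  toFun a := Ideal.Quotient.mk I (a ^ p)
  map_one' := by simp
  map_mul' a b := by simp [mul_pow]
  map_zero' := by simp [zero_pow hp.ne_zero]
  map_add' a b := by
    obtain ⟨r, hr⟩ := exists_add_pow_prime_eq hp a b
    have hp0 : Ideal.Quotient.mk I (p : A) = 0 := Ideal.Quotient.eq_zero_iff_mem.mpr hpI
    simp [hr, hp0]

theorem mk_comp_eq_frobeniusMod_iff {A : Type*} [CommRing A] {p : ℕ} (hp : p.Prime) {I : Ideal A}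
    (hpI : (p : A) ∈ I) (f : A →+* A) :
    (Ideal.Quotient.mk I).comp f = frobeniusMod p hp I hpI ↔ ∀ a, f a - a ^ p ∈ I := by
  simp only [RingHom.ext_iff, RingHom.comp_apply]
  exact forall_congr' fun a => Ideal.Quotient.eq

theorem mk_comp_comp_eq_frobeniusMod_comp {R A : Type*} [CommRing R] [CommRing A] {p : ℕ}
    (hp : p.Prime) {φR : R →+* R} (hφR : ∀ r : R, φR r - r ^ p ∈ Ideal.span {(p : R)})
    (f : R →+* A) :
    (Ideal.Quotient.mk (Ideal.span {(p : A)})).comp (f.comp φR) =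
      (frobeniusMod p hp _ (Ideal.mem_span_singleton_self _)).comp f := by
  ext r
  have h := Ideal.mem_map_of_mem f (hφR r)
  rw [Ideal.map_span, Set.image_singleton, map_natCast, map_sub, map_pow] at h
  exact Ideal.Quotient.eq.mpr h

theorem Polynomial.eq_eval₂RingHom_iff {R S : Type*} [CommSemiring R] [CommSemiring S]
    (f : R[X] →+* S) (g : R →+* S) (s : S) :
    f = eval₂RingHom g s ↔ f.comp C = g ∧ f X = s := by
  constructor
  · rintro rfl
    exact ⟨eval₂RingHom_comp_C g s, eval₂_X g s⟩
  · rintro ⟨hC, hX⟩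
    exact ringHom_ext' (by rw [hC, eval₂RingHom_comp_C]) (hX.trans (eval₂_X g s).symm)

theorem Algebra.FormallyEtale.existsUnique_lift_of_isAdicComplete {P A B : Type*} [CommRing P]
    [CommRing A] [CommRing B] [Algebra P A] [Algebra.FormallyEtale P A] (I : Ideal B)
    [IsAdicComplete I B] (ψ : P →+* B) (g : A →+* B ⧸ I)
    (hg : g.comp (algebraMap P A) = (Ideal.Quotient.mk I).comp ψ) :
    ∃! g' : A →+* B, (Ideal.Quotient.mk I).comp g' = g ∧ g'.comp (algebraMap P A) = ψ := by
  let _ : Algebra P B := ψ.toAlgebra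
  let gP : A →ₐ[P] B ⧸ I := { g with commutes' := RingHom.congr_fun hg }
  obtain ⟨l, hl⟩ := Algebra.FormallySmooth.exists_mkₐ_comp_eq_of_isAdicComplete gP
  refine ⟨l, ⟨congrArg AlgHom.toRingHom hl, l.comp_algebraMap⟩, ?_⟩
  rintro g' ⟨hg'I, hg'P⟩
  let g'P : A →ₐ[P] B := { g' with commutes' := RingHom.congr_fun hg'P }
  have hI : ⨅ n, I ^ n = ⊥ := by
    simpa using (IsAdicComplete.toIsHausdorff (I := I) (M := B)).iInf_pow_smul
  have : g'P = l := Algebra.FormallyUnramified.ext_of_iInf I hI fun a =>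
    (RingHom.congr_fun hg'I a).trans (AlgHom.congr_fun hl a).symm
  exact congrArg AlgHom.toRingHom this

/-- A Frobenius lift on `R` extends uniquely to a `p`-adically complete algebra `A` with a
topologically étale coordinate `x`, in such a way that `x` has rank one (`φ(x) = x^p`). -/
theorem exists_unique_frobenius_lift
    (p : ℕ) (hp : p.Prime)
    (R A : Type u) [CommRing R]
    (φR : R →+* R) (hφR : ∀ r : R, φR r - r ^ p ∈ Ideal.span {(p : R)})
    [CommRing A] [Algebra R A]
    [Algebra (Polynomial R) A] [IsScalarTower R (Polynomial R) A]
    [Algebra.FormallyEtale (Polynomial R) A]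
    (x : A) (hx : x = algebraMap (Polynomial R) A Polynomial.X)
    [IsAdicComplete (Ideal.span {(p : A)}) A] :
    ∃! φA : A →+* A,
      φA.comp (algebraMap R A) = (algebraMap R A).comp φR ∧
      (∀ a : A, φA a - a ^ p ∈ Ideal.span {(p : A)}) ∧
      φA x = x ^ p := by
  set I := Ideal.span {(p : A)}
  have hpI : (p : A) ∈ I := Ideal.mem_span_singleton_self _
  let ψ : R[X] →+* A := eval₂RingHom ((algebraMap R A).comp φR) (x ^ p)
  have hC : (algebraMap R[X] A).comp C = algebraMap R A := by
    rw [IsScalarTower.algebraMap_eq R R[X] A, algebraMap_eq]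
  have hψ : (frobeniusMod p hp I hpI).comp (algebraMap R[X] A) =
      (Ideal.Quotient.mk I).comp ψ := by
    refine ringHom_ext' ?_ ?_
    · rw [RingHom.comp_assoc, hC, RingHom.comp_assoc, eval₂RingHom_comp_C]
      exact (mk_comp_comp_eq_frobeniusMod_comp hp hφR _).symm
    · simp [ψ, hx, frobeniusMod]
  refine (existsUnique_congr fun φ => ?_).mp
    (Algebra.FormallyEtale.existsUnique_lift_of_isAdicComplete I ψ _ hψ)
  rw [mk_comp_eq_frobeniusMod_iff, Polynomial.eq_eval₂RingHom_iff, RingHom.comp_assoc, hC,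
    RingHom.comp_apply, ← hx]
  tauto
end

section
/- Let p be a prime number. Let R be a commutative ring equipped with a δ-structure, i.e., a ring homomorphism s_R : R → W₂(R) into the ring of p-typical truncated Witt vectors of length 2 such that (s_R r).coeff 0 = r for all r ∈ R. Let A be a commutative R-algebra with a formally étale structure map R[X] → A, let x ∈ A be the image of X, and assume A is p-adically complete. Then there exists a unique ring homomorphism s_A : A → W₂(A) such that: (i) (s_A a).coeff 0 = a for all a ∈ A; (ii) s_A ∘ (algebraMap R A) = W₂(algebraMap R A) ∘ s_R, where W₂(algebraMap R A) is the induced map on truncated Witt vectors; and (iii) (s_A x).coeff 1 = 0 (i.e., δ(x) = 0, x has rank one). -/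
open Polynomial

universe u

/-!
Over a ring in which `p` is nilpotent, the kernel of the first projection `W₂(B) → B` is a
nilpotent ideal, because `(0, a) * (0, b) = (0, p * a * b)`. Formal étaleness of `R[X] → A`
thus gives, for every `k`, a unique ring map `A → W₂(A/pᵏ)` lifting `A → A/pᵏ` and restricting
on `R[X]` to the map determined by `sR` on coefficients and by `X ↦ (x, 0)`. Uniqueness makes
these lifts compatible in `k`, and since `A` is `p`-adically complete and separated they glue,
coordinate by coordinate, to the unique section `A → W₂(A)`.
-/

theorem IsHausdorff.eq_of_forall_mk_eq {A : Type*} [CommRing A] {I : Ideal A} [IsHausdorff I A]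
    {a b : A} (h : ∀ k, Ideal.Quotient.mk (I ^ k) a = Ideal.Quotient.mk (I ^ k) b) : a = b :=
  IsHausdorff.eq_iff_smodEq.mpr fun k => by
    rw [Ideal.smul_eq_mul, Ideal.mul_top, SModEq.idealQuotientMk]
    exact h k

theorem IsPrecomplete.exists_forall_mk_eq {A : Type*} [CommRing A] {I : Ideal A}
    [IsPrecomplete I A] (y : ∀ k, A ⧸ I ^ k)
    (hy : ∀ {k l} (h : k ≤ l), Ideal.Quotient.factorPow I h (y l) = y k) :
    ∃ a, ∀ k, Ideal.Quotient.mk (I ^ k) a = y k := by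
  choose z hz using fun k => Ideal.Quotient.mk_surjective (y k)
  have hcauchy : ∀ {k l}, k ≤ l → z k ≡ z l [SMOD (I ^ k • ⊤ : Submodule A A)] := by
    intro k l h
    rw [Ideal.smul_eq_mul, Ideal.mul_top, SModEq.idealQuotientMk, hz, ← hy h, ← hz l]
    rfl
  obtain ⟨a, ha⟩ := IsPrecomplete.prec ‹_› hcauchy
  refine ⟨a, fun k => ?_⟩
  rw [← hz k, ← SModEq.idealQuotientMk, ← Ideal.mul_top (I ^ k), ← Ideal.smul_eq_mul]
  exact (ha k).symm

namespace TruncatedWittVector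

section

variable {p : ℕ} [Fact p.Prime] {n : ℕ} {B C D : Type*} [CommRing B] [CommRing C] [CommRing D]

noncomputable def constantCoeff [NeZero n] : TruncatedWittVector p n B →+* B :=
  (WittVector.truncate n).liftOfSurjective (WittVector.truncate_surjective p n B)
    ⟨WittVector.constantCoeff, fun v hv => by
      rw [WittVector.mem_ker_truncate] at hv
      simpa using hv 0 (Nat.pos_of_neZero n)⟩

@[simp] lemma constantCoeff_apply [NeZero n] (w : TruncatedWittVector p n B) :
    constantCoeff w = w.coeff 0 := by
  obtain ⟨v, rfl⟩ := WittVector.truncate_surjective p n B w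
  rw [constantCoeff, RingHom.liftOfSurjective_comp_apply]
  simp

noncomputable def map (f : B →+* C) : TruncatedWittVector p n B →+* TruncatedWittVector p n C :=
  (WittVector.truncate n).liftOfSurjective (WittVector.truncate_surjective p n B)
    ⟨(WittVector.truncate n).comp (WittVector.map f), fun v hv => by
      rw [WittVector.mem_ker_truncate] at hv
      rw [RingHom.mem_ker, RingHom.comp_apply, ← RingHom.mem_ker, WittVector.mem_ker_truncate]
      intro i hi
      rw [WittVector.map_coeff, hv i hi, map_zero]⟩

@[simp] lemma coeff_map (f : B →+* C) (w : TruncatedWittVector p n B) (i : Fin n) :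
    (map f w).coeff i = f (w.coeff i) := by
  obtain ⟨v, rfl⟩ := WittVector.truncate_surjective p n B w
  rw [map, RingHom.liftOfSurjective_comp_apply]
  simp

lemma map_comp_map (f : B →+* C) (g : C →+* D) :
    (map g).comp (map f) = map (p := p) (n := n) (g.comp f) :=
  RingHom.ext fun w => ext fun i => by simp

lemma constantCoeff_comp_map [NeZero n] (f : B →+* C) :
    constantCoeff.comp (map f) = f.comp (constantCoeff (p := p) (n := n)) :=
  RingHom.ext fun w => by simp

end

section

variable {p : ℕ} {B : Type*} [CommRing B]

lemma eq_mk_zero_coeff_one {w : TruncatedWittVector p 2 B} (h : w.coeff 0 = 0) :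
    w = mk p ![0, w.coeff 1] := by
  ext i
  fin_cases i <;> simp [h]

variable [Fact p.Prime]

lemma truncate_verschiebung (z : WittVector p B) :
    WittVector.truncate 2 (WittVector.verschiebung z) = mk p ![0, z.coeff 0] := by
  ext i
  fin_cases i
  · simp [WittVector.verschiebung_coeff_zero]
  · exact WittVector.verschiebung_coeff_succ z 0

lemma mk_zero_eq_truncate_verschiebung (b : B) :
    mk p ![0, b] =
      WittVector.truncate 2 (WittVector.verschiebung (WittVector.teichmuller p b)) := by
  rw [truncate_verschiebung, WittVector.teichmuller_coeff_zero]

lemma mk_zero_add_mk_zero (a b : B) :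
    mk p ![0, a] + mk p ![0, b] = mk p ![0, a + b] := by
  rw [mk_zero_eq_truncate_verschiebung a, mk_zero_eq_truncate_verschiebung b, ← map_add,
    ← map_add, truncate_verschiebung, WittVector.add_coeff_zero,
    WittVector.teichmuller_coeff_zero, WittVector.teichmuller_coeff_zero]

lemma mk_zero_mul_mk_zero (a b : B) :
    mk p ![0, a] * mk p ![0, b] = mk p ![0, p * (a * b)] := by
  rw [mk_zero_eq_truncate_verschiebung a, mk_zero_eq_truncate_verschiebung b, ← map_mul,
    ← WittVector.verschiebung_mul_frobenius, WittVector.frobenius_verschiebung,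
    truncate_verschiebung, WittVector.mul_coeff_zero, WittVector.mul_coeff_zero,
    WittVector.teichmuller_coeff_zero, WittVector.teichmuller_coeff_zero,
    show (p : WittVector p B).coeff 0 = p from map_natCast WittVector.constantCoeff p]
  ring_nf

lemma coeff_mem_of_mem_ker_constantCoeff_pow (n : ℕ) {w : TruncatedWittVector p 2 B}
    (hw : w ∈ RingHom.ker (constantCoeff (p := p) (n := 2) (B := B)) ^ (n + 1)) :
    w.coeff 0 = 0 ∧ w.coeff 1 ∈ Ideal.span {(p : B)} ^ n := by
  induction n generalizing w with
  | zero =>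
    rw [zero_add, pow_one, RingHom.mem_ker, constantCoeff_apply] at hw
    exact ⟨hw, by simp⟩
  | succ n ih =>
    rw [pow_succ] at hw
    refine Submodule.mul_induction_on hw (fun a ha b hb => ?_) (fun y z hy hz => ?_)
    · obtain ⟨ha0, ha1⟩ := ih ha
      rw [RingHom.mem_ker, constantCoeff_apply] at hb
      rw [eq_mk_zero_coeff_one ha0, eq_mk_zero_coeff_one hb, mk_zero_mul_mk_zero]
      refine ⟨rfl, ?_⟩
      rw [coeff_mk, Matrix.cons_val_one, Matrix.cons_val_fin_one, pow_succ,
        mul_left_comm]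
      exact Ideal.mul_mem_mul ha1 (Ideal.mul_mem_right _ _ (Ideal.mem_span_singleton_self _))
    · rw [eq_mk_zero_coeff_one hy.1, eq_mk_zero_coeff_one hz.1, mk_zero_add_mk_zero]
      exact ⟨rfl, Ideal.add_mem _ hy.2 hz.2⟩

lemma isNilpotent_ker_constantCoeff (h : IsNilpotent (p : B)) :
    IsNilpotent (RingHom.ker (constantCoeff (p := p) (n := 2) (B := B))) := by
  obtain ⟨n, hn⟩ := h
  refine ⟨n + 1, eq_bot_iff.mpr fun w hw => ?_⟩
  obtain ⟨h0, h1⟩ := coeff_mem_of_mem_ker_constantCoeff_pow n hw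
  rw [Ideal.span_singleton_pow, hn, Ideal.span_singleton_eq_bot.mpr rfl, Ideal.mem_bot] at h1
  rw [Ideal.mem_bot, eq_mk_zero_coeff_one h0, h1]
  ext i
  fin_cases i <;> simp

end

section

variable {p : ℕ} [Fact p.Prime] {n : ℕ} {A S : Type*} [CommRing A] [CommRing S]
  {I : Ideal A}

lemma eq_of_forall_map_mk_eq [IsHausdorff I A] {w w' : TruncatedWittVector p n A}
    (h : ∀ k, map (Ideal.Quotient.mk (I ^ k)) w = map (Ideal.Quotient.mk (I ^ k)) w') :
    w = w' :=
  ext fun i => IsHausdorff.eq_of_forall_mk_eq fun k => by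
    simpa using congrArg (coeff i) (h k)

lemma exists_forall_map_mk_eq [IsPrecomplete I A]
    (w : ∀ k, TruncatedWittVector p n (A ⧸ I ^ k))
    (hw : ∀ {k l} (h : k ≤ l), map (Ideal.Quotient.factorPow I h) (w l) = w k) :
    ∃ v, ∀ k, map (Ideal.Quotient.mk (I ^ k)) v = w k := by
  choose a ha using fun i => IsPrecomplete.exists_forall_mk_eq (fun k => (w k).coeff i)
    fun h => by rw [← coeff_map, hw h]
  exact ⟨mk p a, fun k => ext fun i => by simp [ha]⟩

theorem existsUnique_map_mk_comp_eq [IsAdicComplete I A]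
    (F : ∀ k, S →+* TruncatedWittVector p n (A ⧸ I ^ k))
    (hF : ∀ {k l} (h : k ≤ l), (map (Ideal.Quotient.factorPow I h)).comp (F l) = F k) :
    ∃! G : S →+* TruncatedWittVector p n A,
      ∀ k, (map (Ideal.Quotient.mk (I ^ k))).comp G = F k := by
  choose G hG using fun s => exists_forall_map_mk_eq (fun k => F k s)
    fun h => RingHom.congr_fun (hF h) s
  refine ⟨{ toFun := G
            map_one' := eq_of_forall_map_mk_eq fun k => by rw [hG, map_one, map_one]
            map_mul' := fun s t => eq_of_forall_map_mk_eq fun k => by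
              rw [hG, map_mul, map_mul, hG, hG]
            map_zero' := eq_of_forall_map_mk_eq fun k => by rw [hG, map_zero, map_zero]
            map_add' := fun s t => eq_of_forall_map_mk_eq fun k => by
              rw [hG, map_add, map_add, hG, hG] },
    fun k => RingHom.ext fun s => hG s k, fun G' hG' => RingHom.ext fun s => ?_⟩
  exact eq_of_forall_map_mk_eq fun k => (RingHom.congr_fun (hG' k) s).trans (hG s k).symm

end

section

variable {p : ℕ} [Fact p.Prime] {P A B : Type*} [CommRing P] [CommRing A] [CommRing B]
  [Algebra P A] [Algebra.FormallyEtale P A]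

theorem existsUnique_lift_of_isNilpotent (hB : IsNilpotent (p : B)) (g : A →+* B)
    (ψ : P →+* TruncatedWittVector p 2 B)
    (hψ : constantCoeff.comp ψ = g.comp (algebraMap P A)) :
    ∃! F : A →+* TruncatedWittVector p 2 B,
      constantCoeff.comp F = g ∧ F.comp (algebraMap P A) = ψ := by
  let : Algebra P B := (g.comp (algebraMap P A)).toAlgebra
  let : Algebra P (TruncatedWittVector p 2 B) := ψ.toAlgebra
  let gₐ : A →ₐ[P] B := { g with commutes' := fun _ => rfl }
  let πₐ : TruncatedWittVector p 2 B →ₐ[P] B :=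
    { constantCoeff with commutes' := RingHom.congr_fun hψ }
  have hπ : Function.Surjective πₐ := fun b => ⟨mk p ![b, 0], by simp [πₐ]⟩
  have hker := isNilpotent_ker_constantCoeff (p := p) hB
  let Fₐ := Algebra.FormallySmooth.liftOfSurjective gₐ πₐ hπ hker
  refine ⟨Fₐ, ⟨RingHom.ext (Algebra.FormallySmooth.liftOfSurjective_apply gₐ πₐ hπ hker),
    RingHom.ext Fₐ.commutes⟩, fun F ⟨hF0, hF⟩ => ?_⟩
  let F'ₐ : A →ₐ[P] TruncatedWittVector p 2 B := { F with commutes' := RingHom.congr_fun hF }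
  refine congrArg AlgHom.toRingHom (Algebra.FormallyUnramified.ext' constantCoeff hker F'ₐ Fₐ
    fun a => ?_)
  exact (RingHom.congr_fun hF0 a).trans
    (Algebra.FormallySmooth.liftOfSurjective_apply gₐ πₐ hπ hker a).symm

theorem existsUnique_section_of_formallyEtale [IsAdicComplete (Ideal.span {(p : A)}) A]
    (φ : P →+* TruncatedWittVector p 2 A) (hφ : constantCoeff.comp φ = algebraMap P A) :
    ∃! s : A →+* TruncatedWittVector p 2 A,
      (∀ a, (s a).coeff 0 = a) ∧ s.comp (algebraMap P A) = φ := by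
  set I := Ideal.span {(p : A)}
  have hnil (k : ℕ) : IsNilpotent (p : A ⧸ I ^ k) := by
    refine ⟨k, ?_⟩
    rw [← map_natCast (Ideal.Quotient.mk (I ^ k)), ← map_pow, Ideal.Quotient.eq_zero_iff_mem]
    exact Ideal.pow_mem_pow (Ideal.mem_span_singleton_self _) k
  have hψ (k : ℕ) : constantCoeff.comp ((map (Ideal.Quotient.mk (I ^ k))).comp φ) =
      (Ideal.Quotient.mk (I ^ k)).comp (algebraMap P A) := by
    rw [← RingHom.comp_assoc, constantCoeff_comp_map, RingHom.comp_assoc, hφ]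
  choose F hF huniq using fun k => existsUnique_lift_of_isNilpotent (hnil k) _ _ (hψ k)
  have hcompat {k l : ℕ} (h : k ≤ l) :
      (map (Ideal.Quotient.factorPow I h)).comp (F l) = F k := by
    refine huniq k _ ⟨?_, ?_⟩
    · rw [← RingHom.comp_assoc, constantCoeff_comp_map, RingHom.comp_assoc, (hF l).1]
      rfl
    · rw [RingHom.comp_assoc, (hF l).2, ← RingHom.comp_assoc, map_comp_map,
        Ideal.Quotient.factor_comp_mk]
  have hchar (s : A →+* TruncatedWittVector p 2 A) :
      ((∀ a, (s a).coeff 0 = a) ∧ s.comp (algebraMap P A) = φ) ↔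
        ∀ k, (map (Ideal.Quotient.mk (I ^ k))).comp s = F k := by
    constructor
    · rintro ⟨hs0, hsφ⟩ k
      exact huniq k _ ⟨RingHom.ext fun a => by simp [hs0], by rw [RingHom.comp_assoc, hsφ]⟩
    · intro hs
      refine ⟨fun a => IsHausdorff.eq_of_forall_mk_eq (I := I) fun k => ?_,
        RingHom.ext fun q => eq_of_forall_map_mk_eq (I := I) fun k => ?_⟩
      · simpa [← hs k] using RingHom.congr_fun (hF k).1 a
      · simpa [← hs k] using RingHom.congr_fun (hF k).2 q
  exact (existsUnique_congr hchar).mpr (existsUnique_map_mk_comp_eq F hcompat)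

end

section

variable {p : ℕ} [Fact p.Prime] {R A : Type*} [CommRing R] [CommRing A] [Algebra R A]

noncomputable def evalRankOne (sR : R →+* TruncatedWittVector p 2 R) (x : A) :
    R[X] →+* TruncatedWittVector p 2 A :=
  eval₂RingHom ((map (algebraMap R A)).comp sR) (mk p ![x, 0])

variable [Algebra R[X] A] [IsScalarTower R R[X] A] (sR : R →+* TruncatedWittVector p 2 R)

lemma constantCoeff_comp_evalRankOne (hsR : ∀ r, (sR r).coeff 0 = r) :
    constantCoeff.comp (evalRankOne sR (algebraMap R[X] A X)) = algebraMap R[X] A :=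
  ringHom_ext (fun r => by simp [evalRankOne, hsR, IsScalarTower.algebraMap_apply R R[X] A])
    (by simp [evalRankOne])

lemma comp_algebraMap_eq_evalRankOne_iff (s : A →+* TruncatedWittVector p 2 A)
    (hs : ∀ a, (s a).coeff 0 = a) :
    s.comp (algebraMap R[X] A) = evalRankOne sR (algebraMap R[X] A X) ↔
      (∀ (r : R) (i : Fin 2),
          (s (algebraMap R A r)).coeff i = algebraMap R A ((sR r).coeff i)) ∧
        (s (algebraMap R[X] A X)).coeff 1 = 0 := by
  have halg (r : R) : algebraMap R[X] A (C r) = algebraMap R A r :=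
    (IsScalarTower.algebraMap_apply R R[X] A r).symm
  constructor
  · intro h
    refine ⟨fun r i => ?_, ?_⟩
    · simpa [evalRankOne, halg] using congrArg (coeff i) (RingHom.congr_fun h (C r))
    · simpa [evalRankOne] using congrArg (coeff 1) (RingHom.congr_fun h X)
  · rintro ⟨hC, hX⟩
    refine ringHom_ext (fun r => ext fun i => ?_) (ext fun i => ?_)
    · simpa [evalRankOne, halg] using hC r i
    · fin_cases i
      · simp [evalRankOne, hs]
      · simp [evalRankOne, hX]

end

end TruncatedWittVector

/-- A `δ`-structure on `R` (a ring-homomorphism section of `W₂(R) → R`) extends uniquely to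
a `p`-adically complete `R`-algebra `A` with a topologically étale coordinate `x`, in such a
way that `x` has rank one (`δ(x) = 0`).  The compatibility `sA ∘ algebraMap = W₂(algebraMap) ∘ sR`
is expressed coefficientwise, since the induced map on length-two Witt vectors acts
coefficientwise. -/
theorem exists_unique_delta_structure
    (p : ℕ) [hp : Fact p.Prime]
    (R A : Type u) [CommRing R]
    (sR : R →+* TruncatedWittVector p 2 R)
    (hsR : ∀ r : R, (sR r).coeff 0 = r)
    [CommRing A] [Algebra R A]
    [Algebra (Polynomial R) A] [IsScalarTower R (Polynomial R) A]
    [Algebra.FormallyEtale (Polynomial R) A]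
    (x : A) (hx : x = algebraMap (Polynomial R) A Polynomial.X)
    [IsAdicComplete (Ideal.span {(p : A)}) A] :
    ∃! sA : A →+* TruncatedWittVector p 2 A,
      (∀ a : A, (sA a).coeff 0 = a) ∧
      (∀ (r : R) (i : Fin 2),
        (sA (algebraMap R A r)).coeff i = algebraMap R A ((sR r).coeff i)) ∧
      (sA x).coeff 1 = 0 := by
  subst hx
  refine (existsUnique_congr fun s => and_congr_right fun hs => ?_).mp
    (TruncatedWittVector.existsUnique_section_of_formallyEtale _
      (TruncatedWittVector.constantCoeff_comp_evalRankOne sR hsR))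
  exact TruncatedWittVector.comp_algebraMap_eq_evalRankOne_iff sR s hs
end

section
/- Let R be a commutative ring, q ∈ R, p a prime number, and m ≥ 1 a natural number. On the polynomial ring R[X] consider: the R-algebra endomorphism F determined by F(X) = X^p; for c ∈ R the R-algebra endomorphism σ_c determined by σ_c(X) = c·X; and for c ∈ R the unique R-linear endomorphism D_c of R[X] with D_c(X^n) = (n)_c·X^{n−1} for all n ≥ 1 and D_c(1) = 0 (the c-twisted derivative). Then: (1) F ∘ σ_{q^{p^m}} = σ_{q^{p^{m−1}}} ∘ F; and (2) for all f ∈ R[X], (p)_{q^{p^{m−1}}}·X^{p−1}·F(D_{q^{p^m}}(f)) = D_{q^{p^{m−1}}}(F(f)). -/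
open Polynomial Finset

theorem geom_sum_mul_geom_sum_pow {R : Type*} [Semiring R] (x : R) (p n : ℕ) :
    (∑ i ∈ range p, x ^ i) * ∑ j ∈ range n, (x ^ p) ^ j = ∑ i ∈ range (p * n), x ^ i := by
  induction n with
  | zero => simp
  | succ n ih =>
    rw [sum_range_succ, mul_add, ih, Nat.mul_succ, sum_range_add, sum_mul]
    congr 1
    refine sum_congr rfl fun i _ => ?_
    rw [← pow_mul, ← pow_add, add_comm]

namespace Polynomial

variable {R : Type*} [CommRing R]

theorem aeval_X_pow_comp_aeval_C_pow_mul_X (c : R) (p : ℕ) :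
    (aeval (X ^ p : R[X])).comp (aeval (C (c ^ p) * X)) =
      (aeval (C c * X)).comp (aeval (X ^ p : R[X])) :=
  algHom_ext <| by simp [mul_pow]

/-- The identity `(p)_c · (n)_{c^p} = (p n)_c` is what makes the Frobenius intertwine the
twisted derivatives at `c^p` and at `c`. -/
theorem C_geom_sum_mul_X_pow_mul_aeval_X_pow {c : R} {p : ℕ} (hp : 0 < p)
    {D D' : R[X] →ₗ[R] R[X]}
    (hD : ∀ n : ℕ, 1 ≤ n → D (X ^ n) = C (∑ i ∈ range n, (c ^ p) ^ i) * X ^ (n - 1))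
    (hD1 : D 1 = 0)
    (hD' : ∀ n : ℕ, 1 ≤ n → D' (X ^ n) = C (∑ i ∈ range n, c ^ i) * X ^ (n - 1))
    (hD'1 : D' 1 = 0) (f : R[X]) :
    C (∑ i ∈ range p, c ^ i) * X ^ (p - 1) * aeval (X ^ p : R[X]) (D f) =
      D' (aeval (X ^ p : R[X]) f) := by
  induction f using Polynomial.induction_on' with
  | add f g hf hg => simp only [map_add, mul_add, hf, hg]
  | monomial n a =>
    rw [← smul_X_eq_monomial]
    simp only [map_smul, mul_smul_comm]
    congr 1
    rcases Nat.eq_zero_or_pos n with rfl | hn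
    · simp [hD1, hD'1]
    · have hpn : 1 ≤ p * n := Nat.mul_pos hp hn
      have hexp : p - 1 + p * (n - 1) = p * n - 1 := by
        rw [Nat.mul_sub_one]
        have : p ≤ p * n := Nat.le_mul_of_pos_right p hn
        omega
      simp only [map_pow, aeval_X, ← pow_mul, hD _ hn, hD' _ hpn, map_mul, aeval_C,
        algebraMap_eq, ← geom_sum_mul_geom_sum_pow c p n, ← hexp, pow_add]
      ring

end Polynomial

/-- Commutation rules between the Frobenius `F : X ↦ X^p`, the twists `σ_c : X ↦ c·X`
and the twisted derivatives `D_c : X^n ↦ (n)_c·X^{n-1}` on the polynomial ring `R[X]`: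
`F ∘ σ_{q^{p^m}} = σ_{q^{p^{m-1}}} ∘ F` and
`(p)_{q^{p^{m-1}}}·X^{p-1}·F(D_{q^{p^m}} f) = D_{q^{p^{m-1}}}(F f)`. -/
theorem frobenius_twisted_derivative_commutation
    (R : Type*) [CommRing R] (q : R) (p m : ℕ) (hp : p.Prime) (hm : 1 ≤ m)
    (D D' : Polynomial R →ₗ[R] Polynomial R)
    (hD : ∀ n : ℕ, 1 ≤ n →
      D (X ^ n) = C (∑ i ∈ Finset.range n, (q ^ p ^ m) ^ i) * X ^ (n - 1))
    (hD1 : D 1 = 0)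
    (hD' : ∀ n : ℕ, 1 ≤ n →
      D' (X ^ n) = C (∑ i ∈ Finset.range n, (q ^ p ^ (m - 1)) ^ i) * X ^ (n - 1))
    (hD'1 : D' 1 = 0) :
    (∀ f : Polynomial R,
      Polynomial.aeval (X ^ p : Polynomial R)
          (Polynomial.aeval (C (q ^ p ^ m) * X : Polynomial R) f)
        = Polynomial.aeval (C (q ^ p ^ (m - 1)) * X : Polynomial R)
            (Polynomial.aeval (X ^ p : Polynomial R) f)) ∧
    (∀ f : Polynomial R,
      C (∑ i ∈ Finset.range p, (q ^ p ^ (m - 1)) ^ i) * X ^ (p - 1) *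
          Polynomial.aeval (X ^ p : Polynomial R) (D f)
        = D' (Polynomial.aeval (X ^ p : Polynomial R) f)) := by
  have hq : q ^ p ^ m = (q ^ p ^ (m - 1)) ^ p := by
    rw [← pow_mul, ← pow_succ, Nat.sub_add_cancel hm]
  rw [hq] at hD ⊢
  exact ⟨fun f => DFunLike.congr_fun (aeval_X_pow_comp_aeval_C_pow_mul_X _ p) f,
    C_geom_sum_mul_X_pow_mul_aeval_X_pow hp.pos hD hD1 hD' hD'1⟩
end

section
/- Let R be a commutative ring, p a prime number, and λ, λ' ∈ R. Let A' and A be commutative R-algebras, F : A' → A an R-algebra homomorphism (making A an A'-algebra), σ' an R-algebra endomorphism of A', σ an R-algebra endomorphism of A, D' : A' → A' an R-linear map with D'(fg) = D'(f)·g + σ'(f)·D'(g) for all f, g ∈ A', D : A → A an R-linear map with D(fg) = D(f)·g + σ(f)·D(g) for all f, g ∈ A, and x ∈ A. Assume: (i) σ ∘ F = F ∘ σ'; and (ii) λ·D(F(f)) = λ'·x^{p−1}·F(D'(f)) for all f ∈ A'. Let M' be an A'-module and θ' : M' → M' an R-linear map satisfying θ'(f·s) = λ'·(D'(f)·s) +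 σ'(f)·θ'(s) for all f ∈ A', s ∈ M'. Then on M := A ⊗_{A'} M' there exists a unique R-linear map θ : M → M such that θ(f ⊗ s) = λ·(D(f) ⊗ s) + (x^{p−1}·σ(f)) ⊗ θ'(s) for all f ∈ A, s ∈ M'; in particular θ(1 ⊗ s) = x^{p−1} ⊗ θ'(s), and θ satisfies the twisted Leibniz rule θ(f·t) = λ·(D(f)·t) + σ(f)·θ(t) for all f ∈ A, t ∈ M. -/
/-!
On pure tensors `θ` is forced, so the only issue is that `f ⊗ s ↦ l • (D f ⊗ s) + (y * σ f) ⊗ θ' s`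
is balanced over `A'`. Moving `g ∈ A'` across the tensor sign, the Leibniz rule for `D` produces
`l • σ f * D (F g)`, which by (ii) is the term `l' • D' g • s` produced by the Leibniz rule for `θ'`,
while (i) matches the twists `σ (F g)` and `σ' g`. The Leibniz rule for `θ` then only needs checking
on pure tensors, where it is the one for `D`.
-/

open TensorProduct

namespace TensorProduct

variable {R S M N P : Type*} [CommSemiring R] [CommSemiring S]
  [AddCommMonoid M] [AddCommMonoid N] [AddCommMonoid P]
  [Module S M] [Module S N] [Module R M] [SMulCommClass S R M] [Module R P]

theorem ext_addMonoidHomClass {F : Type*} [FunLike F (M ⊗[S] N) P]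
    [AddMonoidHomClass F (M ⊗[S] N) P] {g h : F}
    (H : ∀ m n, g (m ⊗ₜ n) = h (m ⊗ₜ n)) : g = h :=
  DFunLike.ext g h fun t => t.induction_on (by simp only [map_zero]) H
    fun t₁ t₂ h₁ h₂ => by rw [map_add, map_add, h₁, h₂]

def liftBalanced (B : M →ₗ[R] N →+ P) (hB : ∀ (s : S) m n, B (s • m) n = B m (s • n)) :
    M ⊗[S] N →ₗ[R] P where
  toFun := liftAddHom B.toAddMonoidHom hB
  map_add' := map_add _
  map_smul' r t := by
    induction t using TensorProduct.induction_on with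
    | zero => simp only [smul_zero, map_zero]
    | tmul m n => rw [smul_tmul']; exact DFunLike.congr_fun (B.map_smul r m) n
    | add t₁ t₂ h₁ h₂ => simp only [smul_add, map_add, h₁, h₂, RingHom.id_apply]

@[simp]
theorem liftBalanced_tmul (B : M →ₗ[R] N →+ P) (hB : ∀ (s : S) m n, B (s • m) n = B m (s • n))
    (m : M) (n : N) : liftBalanced B hB (m ⊗ₜ n) = B m n :=
  rfl

end TensorProduct

theorem map_one_eq_zero_of_twisted_leibniz {A : Type*} [Ring A] {D σ : A → A} (hσ : σ 1 = 1)
    (hD : ∀ f g, D (f * g) = D f * g + σ f * D g) : D 1 = 0 := by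
  simpa [hσ] using hD 1 1

section PullbackTwistedDerivation

variable {R A' A M' : Type*} [CommSemiring R] [CommSemiring A'] [CommRing A]
  [Algebra R A'] [Algebra R A] [Algebra A' A] [IsScalarTower R A' A]
  [AddCommMonoid M'] [Module A' M'] [Module R M'] [IsScalarTower R A' M']
  (l l' : R) (σ' : A' →ₐ[R] A') (σ : A →ₐ[R] A) (D' : A' →ₗ[R] A') (D : A →ₗ[R] A) (y : A)
  (θ' : M' →ₗ[R] M')

theorem pullbackTwistedDerivation_balanced
    (hD : ∀ f g : A, D (f * g) = D f * g + σ f * D g)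
    (hσ : ∀ f : A', σ (algebraMap A' A f) = algebraMap A' A (σ' f))
    (hlD : ∀ f : A', l • D (algebraMap A' A f) = l' • (y * algebraMap A' A (D' f)))
    (hθ' : ∀ (f : A') (s : M'), θ' (f • s) = l' • (D' f • s) + σ' f • θ' s)
    (g : A') (f : A) (s : M') :
    l • (D (g • f) ⊗ₜ[A'] s) + (y * σ (g • f)) ⊗ₜ[A'] θ' s =
      l • (D f ⊗ₜ[A'] (g • s)) + (y * σ f) ⊗ₜ[A'] θ' (g • s) := by
  have move (a : A) (c : A') (s : M') : (a * algebraMap A' A c) ⊗ₜ[A'] s = a ⊗ₜ[A'] (c • s) := by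
    rw [mul_comm, ← Algebra.smul_def, smul_tmul]
  have hDg : l • ((σ f * D (algebraMap A' A g)) ⊗ₜ[A'] s)
      = (y * σ f) ⊗ₜ[A'] (l' • (D' g • s)) := by
    rw [smul_tmul', ← mul_smul_comm, hlD, mul_smul_comm, mul_left_comm, ← mul_assoc,
      ← smul_tmul', move, ← tmul_smul]
  rw [Algebra.smul_def, mul_comm, hD, map_mul, hσ, ← mul_assoc, move, hθ', add_tmul, smul_add,
    move, hDg, tmul_add]
  abel

def pullbackTwistedDerivation
    (hD : ∀ f g : A, D (f * g) = D f * g + σ f * D g)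
    (hσ : ∀ f : A', σ (algebraMap A' A f) = algebraMap A' A (σ' f))
    (hlD : ∀ f : A', l • D (algebraMap A' A f) = l' • (y * algebraMap A' A (D' f)))
    (hθ' : ∀ (f : A') (s : M'), θ' (f • s) = l' • (D' f • s) + σ' f • θ' s) :
    A ⊗[A'] M' →ₗ[R] A ⊗[A'] M' :=
  liftBalanced
    { toFun f := AddMonoidHom.mk' (fun s => l • (D f ⊗ₜ[A'] s) + (y * σ f) ⊗ₜ[A'] θ' s)
        fun s t => by simp only [map_add, tmul_add, smul_add]; abel
      map_add' f g := by
        ext s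
        simp only [AddMonoidHom.mk'_apply, AddMonoidHom.add_apply, map_add, mul_add, add_tmul,
          smul_add]
        abel
      map_smul' r f := by
        ext s
        simp only [AddMonoidHom.mk'_apply, AddMonoidHom.smul_apply, map_smul, mul_smul_comm,
          ← smul_tmul', smul_add, RingHom.id_apply, smul_comm l r] }
    (pullbackTwistedDerivation_balanced l l' σ' σ D' D y θ' hD hσ hlD hθ')

variable {l l' σ' σ D' D y θ'}
variable (hD : ∀ f g : A, D (f * g) = D f * g + σ f * D g)
  (hσ : ∀ f : A', σ (algebraMap A' A f) = algebraMap A' A (σ' f))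
  (hlD : ∀ f : A', l • D (algebraMap A' A f) = l' • (y * algebraMap A' A (D' f)))
  (hθ' : ∀ (f : A') (s : M'), θ' (f • s) = l' • (D' f • s) + σ' f • θ' s)

@[simp]
theorem pullbackTwistedDerivation_tmul (f : A) (s : M') :
    pullbackTwistedDerivation l l' σ' σ D' D y θ' hD hσ hlD hθ' (f ⊗ₜ s) =
      l • (D f ⊗ₜ[A'] s) + (y * σ f) ⊗ₜ[A'] θ' s :=
  rfl

theorem pullbackTwistedDerivation_one_tmul (s : M') :
    pullbackTwistedDerivation l l' σ' σ D' D y θ' hD hσ hlD hθ' (1 ⊗ₜ s) = y ⊗ₜ[A'] θ' s := by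
  rw [pullbackTwistedDerivation_tmul, map_one_eq_zero_of_twisted_leibniz (map_one σ) hD,
    zero_tmul, smul_zero, zero_add, map_one, mul_one]

theorem pullbackTwistedDerivation_smul (f : A) (t : A ⊗[A'] M') :
    pullbackTwistedDerivation l l' σ' σ D' D y θ' hD hσ hlD hθ' (f • t) =
      l • (D f • t) + σ f • pullbackTwistedDerivation l l' σ' σ D' D y θ' hD hσ hlD hθ' t := by
  induction t using TensorProduct.induction_on with
  | zero => simp only [smul_zero, map_zero, add_zero]
  | tmul g s =>
    simp only [smul_tmul', smul_eq_mul, pullbackTwistedDerivation_tmul, hD, map_mul, add_tmul,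
      smul_add, mul_smul_comm, mul_left_comm y]
    abel
  | add t₁ t₂ h₁ h₂ =>
    simp only [smul_add, map_add, h₁, h₂]
    abel

end PullbackTwistedDerivation

theorem level_raising_twisted_derivation_general
    (R A' A : Type*) [CommRing R] [CommRing A'] [CommRing A]
    [Algebra R A'] [Algebra R A] [Algebra A' A] [IsScalarTower R A' A]
    (p : ℕ) (l l' : R)
    (σ' : A' →ₐ[R] A') (σ : A →ₐ[R] A)
    (D' : A' →ₗ[R] A')
    (D : A →ₗ[R] A) (hD : ∀ f g : A, D (f * g) = D f * g + σ f * D g)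
    (x : A)
    (hcomm1 : ∀ f : A', σ (algebraMap A' A f) = algebraMap A' A (σ' f))
    (hcomm2 : ∀ f : A',
      l • D (algebraMap A' A f) = l' • (x ^ (p - 1) * algebraMap A' A (D' f)))
    (M' : Type*) [AddCommGroup M'] [Module A' M'] [Module R M'] [IsScalarTower R A' M']
    (θ' : M' →ₗ[R] M')
    (hθ' : ∀ (f : A') (s : M'), θ' (f • s) = l' • (D' f • s) + σ' f • θ' s) :
    ∃! θ : (A ⊗[A'] M') →ₗ[R] (A ⊗[A'] M'),
      (∀ (f : A) (s : M'),
        θ (f ⊗ₜ[A'] s) = l • ((D f) ⊗ₜ[A'] s) + (x ^ (p - 1) * σ f) ⊗ₜ[A'] θ' s) ∧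
      (∀ s : M', θ ((1 : A) ⊗ₜ[A'] s) = (x ^ (p - 1)) ⊗ₜ[A'] θ' s) ∧
      (∀ (f : A) (t : A ⊗[A'] M'), θ (f • t) = l • (D f • t) + σ f • θ t) :=
  ⟨pullbackTwistedDerivation l l' σ' σ D' D (x ^ (p - 1)) θ' hD hcomm1 hcomm2 hθ',
    ⟨pullbackTwistedDerivation_tmul hD hcomm1 hcomm2 hθ',
      pullbackTwistedDerivation_one_tmul hD hcomm1 hcomm2 hθ',
      pullbackTwistedDerivation_smul hD hcomm1 hcomm2 hθ'⟩,
    fun _ hθ => ext_addMonoidHomClass fun f s => by rw [hθ.1, pullbackTwistedDerivation_tmul]⟩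

/-- Level raising for twisted derivations: a twisted derivation `θ'` of level `-m` on an
`A'`-module `M'` induces a unique twisted derivation `θ` of level `-m+1` on the Frobenius
pullback `M = A ⊗_{A'} M'`, with `θ(f ⊗ s) = λ·(D f ⊗ s) + (x^{p-1}·σ f) ⊗ θ' s`; in
particular `θ(1 ⊗ s) = x^{p-1} ⊗ θ' s` and `θ` satisfies the twisted Leibniz rule. -/
theorem level_raising_twisted_derivation
    (R A' A : Type*) [CommRing R] [CommRing A'] [CommRing A]
    [Algebra R A'] [Algebra R A] [Algebra A' A] [IsScalarTower R A' A]
    (p : ℕ) (hp : p.Prime) (l l' : R)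
    (σ' : A' →ₐ[R] A') (σ : A →ₐ[R] A)
    (D' : A' →ₗ[R] A') (hD' : ∀ f g : A', D' (f * g) = D' f * g + σ' f * D' g)
    (D : A →ₗ[R] A) (hD : ∀ f g : A, D (f * g) = D f * g + σ f * D g)
    (x : A)
    (hcomm1 : ∀ f : A', σ (algebraMap A' A f) = algebraMap A' A (σ' f))
    (hcomm2 : ∀ f : A',
      l • D (algebraMap A' A f) = l' • (x ^ (p - 1) * algebraMap A' A (D' f)))
    (M' : Type*) [AddCommGroup M'] [Module A' M'] [Module R M'] [IsScalarTower R A' M']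
    (θ' : M' →ₗ[R] M')
    (hθ' : ∀ (f : A') (s : M'), θ' (f • s) = l' • (D' f • s) + σ' f • θ' s) :
    ∃! θ : (A ⊗[A'] M') →ₗ[R] (A ⊗[A'] M'),
      (∀ (f : A) (s : M'),
        θ (f ⊗ₜ[A'] s) = l • ((D f) ⊗ₜ[A'] s) + (x ^ (p - 1) * σ f) ⊗ₜ[A'] θ' s) ∧
      (∀ s : M', θ ((1 : A) ⊗ₜ[A'] s) = (x ^ (p - 1)) ⊗ₜ[A'] θ' s) ∧
      (∀ (f : A) (t : A ⊗[A'] M'), θ (f • t) = l • (D f • t) + σ f • θ t) :=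
  level_raising_twisted_derivation_general R A' A p l l' σ' σ D' D hD x hcomm1 hcomm2 M' θ' hθ'
end
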